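/- Let L_X and L_Y be Laplacians of connected undirected graphs on the same node set V of size N. Then the maximum distance mapping distortion γ^F_max = max over distinct node pairs (p,q) of [(e_p - e_q)ᵀL_Y⁺(e_p - e_q)] / [(e_p - e_q)ᵀL_X⁺(e_p - e_q)] is bounded above by λ_max(L_Y⁺ L_X). -/

import Mathlib

/-!
For `v = e_p - e_q` we have `v ⊥ 1 = ker L_X`, so `v` lies in the range of `L_X` and
`L_X L_X⁺ v = v`. Writing `w = L_X⁺ v` and `T = L_X^{1/2}`, `z = T w`, the two quadratic forms become
`vᵀ L_X⁺ v = zᵀ z` and `vᵀ L_Y⁺ v = zᵀ (T L_Y⁺ T) z`. The symmetric matrix `T L_Y⁺ T` has the same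
spectrum as `L_Y⁺ T T = L_Y⁺ L_X`, so the Rayleigh quotient bound gives the claim.
-/

open Matrix

/-- `B` is the Moore–Penrose pseudoinverse of `A`. -/
def IsMoorePenroseInv {N : ℕ} (A B : Matrix (Fin N) (Fin N) ℝ) : Prop :=
  A * B * A = A ∧ B * A * B = B ∧ (A * B)ᵀ = A * B ∧ (B * A)ᵀ = B * A

namespace IsMoorePenroseInv

variable {N : ℕ} {A B C : Matrix (Fin N) (Fin N) ℝ}

theorem transpose (h : IsMoorePenroseInv A B) : IsMoorePenroseInv Aᵀ Bᵀ := by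
  obtain ⟨h₁, h₂, h₃, h₄⟩ := h
  refine ⟨?_, ?_, ?_, ?_⟩
  · rw [← transpose_mul, ← transpose_mul, ← mul_assoc, h₁]
  · rw [← transpose_mul, ← transpose_mul, ← mul_assoc, h₂]
  · rw [← transpose_mul, transpose_transpose, h₄]
  · rw [← transpose_mul, transpose_transpose, h₃]

theorem unique (hB : IsMoorePenroseInv A B) (hC : IsMoorePenroseInv A C) : B = C := by
  obtain ⟨hB₁, hB₂, hB₃, hB₄⟩ := hB
  obtain ⟨hC₁, hC₂, hC₃, hC₄⟩ := hC
  have hAB : A * B = A * C :=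
    calc A * B = A * C * (A * B) := by rw [← mul_assoc, hC₁]
      _ = (A * B * (A * C))ᵀ := by rw [transpose_mul, hB₃, hC₃]
      _ = A * C := by rw [← mul_assoc, hB₁, hC₃]
  have hBA : B * A = C * A :=
    calc B * A = B * A * (C * A) := by rw [mul_assoc B, ← mul_assoc A, hC₁]
      _ = (C * A * (B * A))ᵀ := by rw [transpose_mul, hB₄, hC₄]
      _ = C * A := by rw [mul_assoc, ← mul_assoc A, hB₁, hC₄]
  calc B = B * A * B := hB₂.symm
    _ = C * A * C := by rw [hBA, mul_assoc, hAB, ← mul_assoc]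
    _ = C := hC₂

theorem isSymm (h : IsMoorePenroseInv A B) (hA : A.IsSymm) : B.IsSymm :=
  (hA.eq ▸ h.transpose).unique h

/-- `A * B` is the orthogonal projection onto `range A = (ker Aᵀ)ᗮ`. -/
theorem mul_mulVec_eq_self (h : IsMoorePenroseInv A B) {v : Fin N → ℝ}
    (hv : ∀ x, Aᵀ *ᵥ x = 0 → v ⬝ᵥ x = 0) : A *ᵥ B *ᵥ v = v := by
  set u := v - A *ᵥ B *ᵥ v
  have hu_perp : ∀ y, u ⬝ᵥ A *ᵥ y = 0 := fun y => by
    have : (A *ᵥ B *ᵥ v) ⬝ᵥ A *ᵥ y = v ⬝ᵥ A *ᵥ y := by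
      rw [dotProduct_comm, mulVec_mulVec, ← dotProduct_transpose_mulVec, h.2.2.1, mulVec_mulVec,
        h.1]
    rw [sub_dotProduct, this, sub_self]
  have hu_ker : Aᵀ *ᵥ u = 0 :=
    dotProduct_self_eq_zero.mp (by rw [dotProduct_transpose_mulVec, hu_perp])
  have huu : u ⬝ᵥ u = 0 :=
    calc u ⬝ᵥ u = v ⬝ᵥ u - (A *ᵥ B *ᵥ v) ⬝ᵥ u := sub_dotProduct _ _ _
      _ = 0 := by rw [hv u hu_ker, dotProduct_comm, hu_perp, sub_self]
  exact (sub_eq_zero.mp (dotProduct_self_eq_zero.mp huu)).symm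

end IsMoorePenroseInv

namespace Matrix

variable {n K : Type*} [Fintype n] [DecidableEq n] [Field K]

theorem hasEigenvalue_mulVecLin_iff_mem_spectrum (A : Matrix n n K) (μ : K) :
    Module.End.HasEigenvalue (mulVecLin A) μ ↔ μ ∈ spectrum K A := by
  rw [Module.End.hasEigenvalue_iff_mem_spectrum, ← spectrum_toLin']
  rfl

theorem spectrum_mul_comm (A B : Matrix n n K) : spectrum K (A * B) = spectrum K (B * A) := by
  ext μ
  simp only [mem_spectrum_iff_isRoot_charpoly, charpoly_mul_comm]

open scoped MatrixOrder in
theorem dotProduct_mulVec_le_of_spectrum_le {A : Matrix n n ℝ} (hA : A.IsHermitian) {r : ℝ}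
    (hr : ∀ μ ∈ spectrum ℝ A, μ ≤ r) (x : n → ℝ) : x ⬝ᵥ A *ᵥ x ≤ r * (x ⬝ᵥ x) := by
  have hle : (r • 1 - A).PosSemidef := by
    rw [← Algebra.algebraMap_eq_smul_one, ← le_iff]
    exact (le_algebraMap_iff_spectrum_le hA.isSelfAdjoint).mpr hr
  have := hle.dotProduct_mulVec_nonneg x
  rw [star_trivial, sub_mulVec, dotProduct_sub, smul_mulVec, one_mulVec, dotProduct_smul,
    smul_eq_mul] at this
  linarith

open scoped MatrixOrder in
theorem dotProduct_mulVec_mul_le {L Y : Matrix n n ℝ} (hL : L.PosSemidef) (hY : Y.IsHermitian)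
    {r : ℝ} (hr : ∀ μ ∈ spectrum ℝ (Y * L), μ ≤ r) (w : n → ℝ) :
    (L *ᵥ w) ⬝ᵥ Y *ᵥ L *ᵥ w ≤ r * (w ⬝ᵥ L *ᵥ w) := by
  set T := CFC.sqrt L
  have hTT : T * T = L := CFC.sqrt_mul_sqrt_self L hL.nonneg
  have hT : Tᵀ = T := isHermitian_iff_isSymm.mp (CFC.sqrt_nonneg L).posSemidef.isHermitian
  have hM : (T * Y * T).IsHermitian := by
    have h := hY.isSelfAdjoint.conjugate' T
    rwa [star_eq_conjTranspose, conjTranspose_eq_transpose_of_trivial, hT] at h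
  have hspec : spectrum ℝ (T * Y * T) = spectrum ℝ (Y * L) := by
    rw [mul_assoc, spectrum_mul_comm, mul_assoc, hTT]
  have hnum : (L *ᵥ w) ⬝ᵥ Y *ᵥ L *ᵥ w = (T *ᵥ w) ⬝ᵥ (T * Y * T) *ᵥ T *ᵥ w := by
    rw [← hTT, ← mulVec_mulVec, dotProduct_comm, ← hT, dotProduct_transpose_mulVec, hT,
      mulVec_mulVec, mulVec_mulVec]
  have hden : w ⬝ᵥ L *ᵥ w = (T *ᵥ w) ⬝ᵥ T *ᵥ w := by
    rw [← hTT, ← mulVec_mulVec, ← hT, dotProduct_transpose_mulVec, hT]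
  rw [hnum, hden]
  exact dotProduct_mulVec_le_of_spectrum_le hM (hspec ▸ hr) (T *ᵥ w)

end Matrix

theorem SimpleGraph.Connected.dotProduct_eq_zero_of_lapMatrix_mulVec_eq_zero {V : Type*}
    [Fintype V] [DecidableEq V] {G : SimpleGraph V} [DecidableRel G.Adj] (hG : G.Connected)
    {v x : V → ℝ} (hv : ∑ i, v i = 0) (hx : G.lapMatrix ℝ *ᵥ x = 0) : v ⬝ᵥ x = 0 := by
  obtain ⟨i⟩ := hG.nonempty
  have hconst : x = fun _ => x i := funext fun j =>
    (G.lapMatrix_mulVec_eq_zero_iff_forall_reachable.mp hx) j i (hG.preconnected j i)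
  rw [hconst, dotProduct, ← Finset.sum_mul, hv, zero_mul]

theorem dmd_le_spade_general (N : ℕ)
    (GX GY : SimpleGraph (Fin N)) [DecidableRel GX.Adj] [DecidableRel GY.Adj]
    (hGX : GX.Connected)
    (Xp Yp : Matrix (Fin N) (Fin N) ℝ)
    (hXp : IsMoorePenroseInv (GX.lapMatrix ℝ) Xp)
    (hYp : IsMoorePenroseInv (GY.lapMatrix ℝ) Yp)
    (lam : ℝ)
    (hlam_max : ∀ μ : ℝ,
      Module.End.HasEigenvalue (Matrix.mulVecLin (Yp * GX.lapMatrix ℝ)) μ → μ ≤ lam) :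
    ∀ p q : Fin N, p ≠ q →
      ((Pi.single p 1 - Pi.single q 1) ⬝ᵥ Yp.mulVec (Pi.single p 1 - Pi.single q 1)) /
        ((Pi.single p 1 - Pi.single q 1) ⬝ᵥ Xp.mulVec (Pi.single p 1 - Pi.single q 1)) ≤
      lam := by
  intro p q hpq
  set L := GX.lapMatrix ℝ
  set v : Fin N → ℝ := Pi.single p 1 - Pi.single q 1
  set w := Xp *ᵥ v
  have hL : L.PosSemidef := GX.posSemidef_lapMatrix ℝ
  have hLw : L *ᵥ w = v := hXp.mul_mulVec_eq_self fun x hx =>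
    hGX.dotProduct_eq_zero_of_lapMatrix_mulVec_eq_zero (by simp [v])
      ((GX.isSymm_lapMatrix (R := ℝ)).eq ▸ hx)
  have hden : v ⬝ᵥ w = w ⬝ᵥ L *ᵥ w := by
    nth_rw 1 [← hLw]
    exact dotProduct_comm _ _
  have hpos : 0 < v ⬝ᵥ w := by
    have hv : v ≠ 0 := fun h => by simpa [v, hpq] using congrFun h p
    have hne : w ⬝ᵥ L *ᵥ w ≠ 0 := fun h =>
      hv (hLw ▸ (hL.dotProduct_mulVec_zero_iff w).mp (by rwa [star_trivial]))
    rw [hden]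
    exact (by simpa using hL.dotProduct_mulVec_nonneg w : 0 ≤ w ⬝ᵥ L *ᵥ w).lt_of_ne' hne
  have hY : Yp.IsHermitian :=
    isHermitian_iff_isSymm.mpr (hYp.isSymm (GY.isSymm_lapMatrix (R := ℝ)))
  rw [div_le_iff₀ hpos]
  calc v ⬝ᵥ Yp *ᵥ v = (L *ᵥ w) ⬝ᵥ Yp *ᵥ L *ᵥ w := by rw [hLw]
    _ ≤ lam * (w ⬝ᵥ L *ᵥ w) := dotProduct_mulVec_mul_le hL hY
      (fun μ hμ => hlam_max μ ((hasEigenvalue_mulVecLin_iff_mem_spectrum _ μ).mpr hμ)) w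
    _ = lam * (v ⬝ᵥ w) := by rw [hden]

/-- The maximum distance mapping distortion over all distinct node pairs is bounded above
by the SPADE score λ_max(L_Y⁺ L_X). -/
theorem dmd_le_spade (N : ℕ)
    (GX GY : SimpleGraph (Fin N)) [DecidableRel GX.Adj] [DecidableRel GY.Adj]
    (hGX : GX.Connected) (hGY : GY.Connected)
    (Xp Yp : Matrix (Fin N) (Fin N) ℝ)
    (hXp : IsMoorePenroseInv (GX.lapMatrix ℝ) Xp)
    (hYp : IsMoorePenroseInv (GY.lapMatrix ℝ) Yp)
    (lam : ℝ)
    (hlam : Module.End.HasEigenvalue (Matrix.mulVecLin (Yp * GX.lapMatrix ℝ)) lam)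
    (hlam_max : ∀ μ : ℝ,
      Module.End.HasEigenvalue (Matrix.mulVecLin (Yp * GX.lapMatrix ℝ)) μ → μ ≤ lam) :
    ∀ p q : Fin N, p ≠ q →
      ((Pi.single p 1 - Pi.single q 1) ⬝ᵥ Yp.mulVec (Pi.single p 1 - Pi.single q 1)) /
        ((Pi.single p 1 - Pi.single q 1) ⬝ᵥ Xp.mulVec (Pi.single p 1 - Pi.single q 1)) ≤
      lam :=
  dmd_le_spade_general N GX GY hGX Xp Yp hXp hYp lam hlam_max
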